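/- Let F be a PCAF, C a set of claims, i ∈ {2,3,4}, and σ ∈ {prf, sem}. Then C ∈ σ_p^i(F) if and only if claim(E_*^i(C)) = C and E_*^i(C) ∈ σ(Red_i(F)). In particular, if claim(E_*^i(C)) = C but E_*^i(C) is not a preferred (respectively semi-stable) extension of Red_i(F), then no preferred (respectively semi-stable) extension S of Red_i(F) satisfies claim(S) = C. -/

import Mathlib

/-- A claim-augmented argumentation framework (CAF): a finite set of arguments,
an attack relation between the arguments, and a claim function assigning
a claim to each argument.  Arguments and claims are drawn from `ℕ`. -/
structure CAF where
  args : Finset ℕ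
  att : Set (ℕ × ℕ)
  claim : ℕ → ℕ
  att_dom : ∀ p ∈ att, p.1 ∈ args ∧ p.2 ∈ args

namespace CAF

/-- A CAF is well-formed if arguments with the same claim attack the same arguments. -/
def wf (F : CAF) : Prop :=
  ∀ a ∈ F.args, ∀ b ∈ F.args, F.claim a = F.claim b →
    ∀ c, ((a, c) ∈ F.att ↔ (b, c) ∈ F.att)

/-- `S` attacks the argument `b` in `F`. -/
def attacks (F : CAF) (S : Set ℕ) (b : ℕ) : Prop := ∃ a ∈ S, (a, b) ∈ F.att

/-- The argument `a` is defended by `S` in `F`. -/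
def defends (F : CAF) (S : Set ℕ) (a : ℕ) : Prop :=
  ∀ b, (b, a) ∈ F.att → F.attacks S b

/-- The range `S⊕` of `S` in `F`. -/
def range (F : CAF) (S : Set ℕ) : Set ℕ := S ∪ {b | F.attacks S b}

/-- Conflict-free sets. -/
def cf (F : CAF) (S : Set ℕ) : Prop :=
  S ⊆ ↑F.args ∧ ∀ a ∈ S, ∀ b ∈ S, (a, b) ∉ F.att

/-- Admissible sets. -/
def adm (F : CAF) (S : Set ℕ) : Prop :=
  F.cf S ∧ ∀ a ∈ S, F.defends S a

/-- Complete extensions. -/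
def com (F : CAF) (S : Set ℕ) : Prop :=
  F.adm S ∧ ∀ a ∈ F.args, F.defends S a → a ∈ S

/-- Naive extensions: ⊆-maximal conflict-free sets. -/
def naive (F : CAF) (S : Set ℕ) : Prop :=
  F.cf S ∧ ¬ ∃ T, F.cf T ∧ S ⊂ T

/-- Stable extensions. -/
def stb (F : CAF) (S : Set ℕ) : Prop :=
  F.cf S ∧ ∀ a ∈ F.args, a ∉ S → F.attacks S a

/-- Preferred extensions: ⊆-maximal admissible sets. -/
def prf (F : CAF) (S : Set ℕ) : Prop :=
  F.adm S ∧ ¬ ∃ T, F.adm T ∧ S ⊂ T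

/-- Semi-stable extensions: admissible sets with ⊆-maximal range among admissible sets. -/
def sem (F : CAF) (S : Set ℕ) : Prop :=
  F.adm S ∧ ¬ ∃ T, F.adm T ∧ F.range S ⊂ F.range T

/-- Stage extensions: conflict-free sets with ⊆-maximal range among conflict-free sets. -/
def stg (F : CAF) (S : Set ℕ) : Prop :=
  F.cf S ∧ ¬ ∃ T, F.cf T ∧ F.range S ⊂ F.range T

/-- The claim-based variant `σ_c` of a semantics `σ`. -/
def claimSem (σ : CAF → Set ℕ → Prop) (F : CAF) : Set (Set ℕ) :=
  {C | ∃ S, σ F S ∧ F.claim '' S = C}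

/-- The wf-problematic part of a CAF: the pairs of arguments `(a,b)` such that
`(a,b)` is not an attack but some argument `a'` with the same claim as `a` attacks `b`. -/
def wfp (F : CAF) : Set (ℕ × ℕ) :=
  {p | p.1 ∈ F.args ∧ p.2 ∈ F.args ∧ p ∉ F.att ∧
       ∃ a' ∈ F.args, F.claim a' = F.claim p.1 ∧ (a', p.2) ∈ F.att}

end CAF

/-- A preference-based CAF (PCAF): a well-formed CAF together with an
asymmetric preference relation over its arguments. -/
structure PCAF extends CAF where
  pref : ℕ → ℕ → Prop
  pref_dom : ∀ a b, pref a b → a ∈ args ∧ b ∈ args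
  pref_asymm : ∀ a b, pref a b → ¬ pref b a
  isWf : toCAF.wf

/-- The attack relation obtained from a PCAF by Reduction `i` (`i ∈ {1,2,3,4}`). -/
def redAtt (i : ℕ) (F : PCAF) : Set (ℕ × ℕ) :=
  if i = 1 then {p | p ∈ F.att ∧ ¬ F.pref p.2 p.1}
  else if i = 2 then
    {p | (p ∈ F.att ∧ ¬ F.pref p.2 p.1) ∨
         ((p.2, p.1) ∈ F.att ∧ p ∉ F.att ∧ F.pref p.1 p.2)}
  else if i = 3 then
    {p | (p ∈ F.att ∧ ¬ F.pref p.2 p.1) ∨ (p ∈ F.att ∧ (p.2, p.1) ∉ F.att)}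
  else if i = 4 then
    {p | (p ∈ F.att ∧ ¬ F.pref p.2 p.1) ∨
         ((p.2, p.1) ∈ F.att ∧ p ∉ F.att ∧ F.pref p.1 p.2) ∨
         (p ∈ F.att ∧ (p.2, p.1) ∉ F.att)}
  else ∅

/-- The CAF `Red_i(F)` obtained from the PCAF `F` by Reduction `i`. -/
def Red (i : ℕ) (F : PCAF) : CAF where
  args := F.args
  att := redAtt i F
  claim := F.claim
  att_dom := by
    intro p hp
    unfold redAtt at hp
    split_ifs at hp
    · simp only [Set.mem_setOf_eq] at hp
      exact F.att_dom p hp.1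
    · simp only [Set.mem_setOf_eq] at hp
      rcases hp with ⟨h, -⟩ | ⟨h, -, -⟩
      · exact F.att_dom p h
      · exact ⟨(F.att_dom _ h).2, (F.att_dom _ h).1⟩
    · simp only [Set.mem_setOf_eq] at hp
      rcases hp with ⟨h, -⟩ | ⟨h, -⟩ <;> exact F.att_dom p h
    · simp only [Set.mem_setOf_eq] at hp
      rcases hp with ⟨h, -⟩ | ⟨h, -, -⟩ | ⟨h, -⟩
      · exact F.att_dom p h
      · exact ⟨(F.att_dom _ h).2, (F.att_dom _ h).1⟩
      · exact F.att_dom p h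
    · exact absurd hp (Set.notMem_empty p)

/-- `Image_i`: the class of CAFs obtainable by applying Reduction `i` to a PCAF. -/
def ImageI (i : ℕ) : Set CAF := {F | ∃ G : PCAF, Red i G = F}

/-- `ImageTrans_i`: the class of CAFs obtainable by applying Reduction `i`
to a PCAF with a transitive preference relation. -/
def ImageTransI (i : ℕ) : Set CAF :=
  {F | ∃ G : PCAF, Transitive G.pref ∧ Red i G = F}

/-- The class of well-formed CAFs. -/
def wfCAFs : Set CAF := {F | F.wf}

/-- The preference-claim-based variant `σ_p^i` of a semantics `σ`. -/
def prefSem (σ : CAF → Set ℕ → Prop) (i : ℕ) (F : PCAF) : Set (Set ℕ) :=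
  CAF.claimSem σ (Red i F)

/-- `E_0(C)`: all arguments of `F` with a claim in `C`. -/
def E0 (F : PCAF) (C : Set ℕ) : Set ℕ := {a | a ∈ F.args ∧ F.claim a ∈ C}

/-- `E_1^i(C)`: the arguments of `E_0(C)` not attacked by `E_0(C)` in the
underlying AF of `F` (this set does not depend on `i`). -/
def E1 (F : PCAF) (C : Set ℕ) : Set ℕ :=
  E0 F C \ {b | ∃ a ∈ E0 F C, (a, b) ∈ F.att}

/-- The sequence `E_k^i(C)`. -/
def Ek (F : PCAF) (i : ℕ) (C : Set ℕ) : ℕ → Set ℕ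
  | 0 => E0 F C
  | 1 => E1 F C
  | (k + 2) => {x | x ∈ Ek F i C (k + 1) ∧ (Red i F).defends (Ek F i C (k + 1)) x}

/-- `E_*^i(C)`: the fixed point of the sequence `E_k^i(C)` (reached after at
most `|A|` steps, since the sequence is ⊆-decreasing from index 1 on). -/
def Estar (F : PCAF) (i : ℕ) (C : Set ℕ) : Set ℕ := Ek F i C (F.args.card + 2)

/-! For `i ∈ {2,3,4}`, `Red_i(F)` keeps every conflict of `F` (possibly reversed) and creates no new
one. Hence `E_1(C)` is conflict-free in `Red_i(F)`, and by well-formedness every admissible set `S`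
of `Red_i(F)` with `claim(S) = C` lies in `E_1(C)`. Iteratively discarding undefended arguments
stabilises on `E_*(C)`, which is admissible, and an admissible `S ⊆ E_1(C)` survives every round,
so `E_*(C)` is the largest admissible set with claims `C`. A preferred or semi-stable `S` with
`claim(S) = C` therefore sits inside the admissible `E_*(C)`, which forces `E_*(C)` to be preferred
(resp. semi-stable) as well. -/

open Function

lemma Set.isFixedPt_iterate_of_ncard_le {α : Type*} {f : Set α → Set α} (hf : ∀ X, f X ⊆ X)
    {X : Set α} (hX : X.Finite) {n : ℕ} (hn : X.ncard ≤ n) : IsFixedPt f (f^[n] X) := by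
  induction n generalizing X with
  | zero =>
    rw [Set.ncard_eq_zero hX |>.mp (Nat.le_zero.mp hn)]
    exact Set.subset_empty_iff.mp (hf ∅)
  | succ n ih =>
    by_cases hfix : f X = X
    · rwa [iterate_fixed hfix]
    · rw [iterate_succ_apply]
      have hlt : (f X).ncard < X.ncard := Set.ncard_lt_ncard ((hf X).ssubset_of_ne hfix) hX
      exact ih (hX.subset (hf X)) (by omega)

namespace CAF

variable (G : CAF)

def defendedIn (X : Set ℕ) : Set ℕ := {x | x ∈ X ∧ G.defends X x}

variable {G}

lemma defends_mono {S T : Set ℕ} {x : ℕ} (hST : S ⊆ T) (hS : G.defends S x) :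
    G.defends T x := fun b hb =>
  let ⟨a, ha, hab⟩ := hS b hb
  ⟨a, hST ha, hab⟩

lemma range_mono {S T : Set ℕ} (hST : S ⊆ T) : G.range S ⊆ G.range T := by
  rintro x (hx | ⟨a, ha, hax⟩)
  · exact Or.inl (hST hx)
  · exact Or.inr ⟨a, hST ha, hax⟩

lemma iterate_defendedIn_subset (X : Set ℕ) : ∀ k, G.defendedIn^[k] X ⊆ X
  | 0 => subset_rfl
  | k + 1 => by
    rw [iterate_succ_apply']
    exact fun x hx => iterate_defendedIn_subset X k hx.1

lemma subset_iterate_defendedIn {S X : Set ℕ} (hS : ∀ x ∈ S, G.defends S x) (hSX : S ⊆ X) :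
    ∀ k, S ⊆ G.defendedIn^[k] X
  | 0 => hSX
  | k + 1 => by
    rw [iterate_succ_apply']
    have ih := subset_iterate_defendedIn hS hSX k
    exact fun x hx => ⟨ih hx, defends_mono ih (hS x hx)⟩

lemma prf_of_subset {S E : Set ℕ} (hS : G.prf S) (hSE : S ⊆ E) (hE : G.adm E) : G.prf E := by
  obtain rfl : S = E := by_contra fun hne => hS.2 ⟨E, hE, hSE.ssubset_of_ne hne⟩
  exact hS

lemma sem_of_subset {S E : Set ℕ} (hS : G.sem S) (hSE : S ⊆ E) (hE : G.adm E) : G.sem E := by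
  have hrange : G.range S = G.range E :=
    by_contra fun hne => hS.2 ⟨E, hE, (range_mono hSE).ssubset_of_ne hne⟩
  exact ⟨hE, hrange ▸ hS.2⟩

end CAF

section Reductions

variable {F : PCAF} {C : Set ℕ} {i : ℕ}

lemma att_or_att_swap_of_mem_redAtt (hi : i ∈ ({2, 3, 4} : Set ℕ)) {a b : ℕ}
    (h : (a, b) ∈ redAtt i F) : (a, b) ∈ F.att ∨ (b, a) ∈ F.att := by
  rcases hi with rfl | rfl | rfl <;> simp [redAtt] at h <;> tauto

lemma mem_redAtt_or_swap_of_mem_att (hi : i ∈ ({2, 3, 4} : Set ℕ)) {a b : ℕ}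
    (h : (a, b) ∈ F.att) : (a, b) ∈ redAtt i F ∨ (b, a) ∈ redAtt i F := by
  have := F.pref_asymm a b
  rcases hi with rfl | rfl | rfl <;> simp [redAtt] <;>
    by_cases hp : F.pref b a <;> by_cases hr : (b, a) ∈ F.att <;> tauto

lemma E1_subset_args : E1 F C ⊆ F.args := fun _ hx => hx.1.1

lemma cf_E1 (hi : i ∈ ({2, 3, 4} : Set ℕ)) : (Red i F).cf (E1 F C) := by
  refine ⟨E1_subset_args, fun a ha b hb hab => ?_⟩
  rcases att_or_att_swap_of_mem_redAtt hi hab with h | h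
  · exact hb.2 ⟨a, ha.1, h⟩
  · exact ha.2 ⟨b, hb.1, h⟩

lemma subset_E1 (hi : i ∈ ({2, 3, 4} : Set ℕ)) {S : Set ℕ} (hS : (Red i F).cf S)
    (hC : F.claim '' S = C) : S ⊆ E1 F C := by
  have hE0 : S ⊆ E0 F C := fun x hx => ⟨hS.1 hx, hC ▸ Set.mem_image_of_mem _ hx⟩
  refine fun b hb => ⟨hE0 hb, ?_⟩
  rintro ⟨a, ha, hab⟩
  obtain ⟨a', ha', hclaim⟩ : F.claim a ∈ F.claim '' S := hC ▸ ha.2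
  -- well-formedness transfers the attack on `b` to the argument `a' ∈ S` sharing `a`'s claim
  have ha'b : (a', b) ∈ F.att := (F.isWf a' (hS.1 ha') a ha.1 hclaim b).mpr hab
  rcases mem_redAtt_or_swap_of_mem_att hi ha'b with h | h
  · exact hS.2 a' ha' b hb h
  · exact hS.2 b hb a' ha' h

lemma Ek_succ_eq_iterate (k : ℕ) :
    Ek F i C (k + 1) = (Red i F).defendedIn^[k] (E1 F C) := by
  induction k with
  | zero => rfl
  | succ k ih =>
    rw [iterate_succ_apply', ← ih]
    rfl

lemma Estar_subset_E1 : Estar F i C ⊆ E1 F C :=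
  (Ek_succ_eq_iterate _).trans_subset (CAF.iterate_defendedIn_subset _ _)

lemma defends_Estar : ∀ x ∈ Estar F i C, (Red i F).defends (Estar F i C) x := by
  have hfix : IsFixedPt (Red i F).defendedIn (Estar F i C) := by
    rw [Estar, Ek_succ_eq_iterate]
    refine Set.isFixedPt_iterate_of_ncard_le (fun X _ hx => hx.1)
      (F.args.finite_toSet.subset E1_subset_args) ?_
    calc (E1 F C).ncard ≤ (F.args : Set ℕ).ncard :=
          Set.ncard_le_ncard E1_subset_args F.args.finite_toSet
      _ ≤ F.args.card + 1 := by rw [Set.ncard_coe_finset]; omega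
  intro x hx
  rw [← hfix] at hx
  exact hx.2

lemma adm_Estar (hi : i ∈ ({2, 3, 4} : Set ℕ)) : (Red i F).adm (Estar F i C) := by
  refine ⟨⟨fun x hx => E1_subset_args (Estar_subset_E1 hx), fun a ha b hb => ?_⟩, defends_Estar⟩
  exact (cf_E1 hi).2 a (Estar_subset_E1 ha) b (Estar_subset_E1 hb)

lemma subset_Estar (hi : i ∈ ({2, 3, 4} : Set ℕ)) {S : Set ℕ} (hS : (Red i F).adm S)
    (hC : F.claim '' S = C) : S ⊆ Estar F i C := by
  rw [Estar, Ek_succ_eq_iterate]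
  exact CAF.subset_iterate_defendedIn hS.2 (subset_E1 hi hS.1 hC) _

lemma claim_image_Estar (hi : i ∈ ({2, 3, 4} : Set ℕ)) {S : Set ℕ} (hS : (Red i F).adm S)
    (hC : F.claim '' S = C) : F.claim '' Estar F i C = C := by
  refine (Set.image_subset_iff.mpr fun x hx => (Estar_subset_E1 hx).1.2).antisymm ?_
  have hmono := Set.image_mono (f := F.claim) (subset_Estar hi hS hC)
  rwa [hC] at hmono

lemma Estar_of_claim_image_eq (hi : i ∈ ({2, 3, 4} : Set ℕ))
    {σ : CAF → Set ℕ → Prop} (hσ : σ ∈ ({CAF.prf, CAF.sem} : Set (CAF → Set ℕ → Prop)))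
    {S : Set ℕ} (hS : σ (Red i F) S) (hC : F.claim '' S = C) :
    F.claim '' Estar F i C = C ∧ σ (Red i F) (Estar F i C) := by
  rcases hσ with rfl | rfl
  · exact ⟨claim_image_Estar hi hS.1 hC,
      CAF.prf_of_subset hS (subset_Estar hi hS.1 hC) (adm_Estar hi)⟩
  · exact ⟨claim_image_Estar hi hS.1 hC,
      CAF.sem_of_subset hS (subset_Estar hi hS.1 hC) (adm_Estar hi)⟩

end Reductions

/-- For `i ∈ {2,3,4}` and `σ ∈ {prf, sem}`: `C ∈ σ_p^i(F)` iff
`claim(E_*^i(C)) = C` and `E_*^i(C) ∈ σ(Red_i(F))`.  In particular, if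
`claim(E_*^i(C)) = C` but `E_*^i(C)` is not a preferred (resp. semi-stable)
extension of `Red_i(F)`, then no preferred (resp. semi-stable) extension `S` of
`Red_i(F)` satisfies `claim(S) = C`. -/
theorem stmt_17 (F : PCAF) (C : Set ℕ) :
    ∀ i ∈ ({2, 3, 4} : Set ℕ),
      ∀ σ ∈ ({CAF.prf, CAF.sem} : Set (CAF → Set ℕ → Prop)),
        (C ∈ prefSem σ i F ↔
          (F.claim '' Estar F i C = C ∧ σ (Red i F) (Estar F i C))) ∧
        ((F.claim '' Estar F i C = C ∧ ¬ σ (Red i F) (Estar F i C)) →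
          ∀ S : Set ℕ, σ (Red i F) S → F.claim '' S ≠ C) := by
  intro i hi σ hσ
  refine ⟨⟨fun ⟨S, hS, hC⟩ => Estar_of_claim_image_eq hi hσ hS hC,
    fun ⟨hC, hE⟩ => ⟨Estar F i C, hE, hC⟩⟩, ?_⟩
  rintro ⟨-, hE⟩ S hS hC
  exact hE (Estar_of_claim_image_eq hi hσ hS hC).2
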